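/- arXiv:2506.01021 — 5 statements merged into one kernel-verified Lean document; each statement's English description precedes it below -/
import Mathlib

section
/- Let p ∈ (0,1), p* = min{p,1−p}, and let X_1,…,X_t be independent Bernoulli(p) random variables. Let (A_1,…,A_r) be an η-layered sequence of subsets of [t], meaning |A_j \ (A_{j+1} ∪ … ∪ A_r)| ≥ η for all 1 ≤ j ≤ r−1, and additionally |A_r| ≥ η. Define Y_j = Σ_{i∈A_j} X_i mod 2. If r·e^{−2ηp*} < 1, then for every (s_1,…,s_r) ∈ {0,1}^r, P[Y_1=s_1, …, Y_r=s_r] ∈ [(1−r·e^{−2ηp*})·2^{−r}, (1−r·e^{−2ηp*})^{−1}·2^{−r}]. -/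
open MeasureTheory ProbabilityTheory



namespace Stmt1Aux

set_option linter.unusedSectionVars false

variable {ι : Type*} [Fintype ι] [DecidableEq ι]

/-- weight of configuration T on domain U -/
def wt (p : ℝ) (U T : Finset ι) : ℝ := ∏ i ∈ U, (if i ∈ T then p else 1 - p)

lemma wt_nonneg {p : ℝ} (hp0 : 0 ≤ p) (hp1 : p ≤ 1) (U T : Finset ι) : 0 ≤ wt p U T :=
  Finset.prod_nonneg fun i _ => by split <;> linarith

lemma wt_congr {p : ℝ} {U T T' : Finset ι} (h : ∀ i ∈ U, i ∈ T ↔ i ∈ T') :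
    wt p U T = wt p U T' :=
  Finset.prod_congr rfl fun i hi => by simp [h i hi]

lemma wt_union {p : ℝ} {B C : Finset ι} (h : Disjoint B C) (T : Finset ι) :
    wt p (B ∪ C) T = wt p B T * wt p C T :=
  Finset.prod_union h

lemma wt_eq {p : ℝ} {B T : Finset ι} (hT : T ⊆ B) :
    wt p B T = (∏ _i ∈ T, p) * ∏ _i ∈ B \ T, (1 - p) := by
  rw [wt]
  have hB : B = T ∪ (B \ T) := (Finset.union_sdiff_of_subset hT).symm
  conv_lhs => rw [hB]
  rw [Finset.prod_union Finset.disjoint_sdiff]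
  congr 1
  · exact Finset.prod_congr rfl fun i hi => if_pos hi
  · refine Finset.prod_congr rfl fun i hi => if_neg ?_
    exact (Finset.mem_sdiff.1 hi).2

lemma sum_wt (p : ℝ) (B : Finset ι) : ∑ T ∈ B.powerset, wt p B T = 1 := by
  have h : ∀ T ∈ B.powerset, wt p B T = (∏ _i ∈ T, p) * ∏ _i ∈ B \ T, (1 - p) :=
    fun T hT => wt_eq (Finset.mem_powerset.1 hT)
  rw [Finset.sum_congr rfl h, ← Finset.prod_add]
  simp

lemma sum_wt_sign (p : ℝ) (B : Finset ι) :
    ∑ T ∈ B.powerset, (-1 : ℝ) ^ T.card * wt p B T = (1 - 2 * p) ^ B.card := by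
  have h : ∀ T ∈ B.powerset, (-1 : ℝ) ^ T.card * wt p B T
      = (∏ _i ∈ T, (-p)) * ∏ _i ∈ B \ T, (1 - p) := by
    intro T hT
    rw [wt_eq (Finset.mem_powerset.1 hT), Finset.prod_const, Finset.prod_const,
      Finset.prod_const, neg_pow]
    ring
  rw [Finset.sum_congr rfl h, ← Finset.prod_add]
  rw [Finset.prod_congr rfl (fun i (_ : i ∈ B) => by ring : ∀ i ∈ B, (-p) + (1 - p) = 1 - 2 * p),
    Finset.prod_const]

lemma neg_one_pow_mod_two (n : ℕ) : (-1 : ℝ) ^ n = (-1) ^ (n % 2) := by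
  conv_lhs => rw [← Nat.div_add_mod n 2]
  rw [pow_add, pow_mul]
  norm_num

lemma sum_wt_parity (p : ℝ) (B : Finset ι) (b : ℕ) (hb : b ≤ 1) :
    ∑ T ∈ B.powerset, (if T.card % 2 = b then wt p B T else 0)
      = (1 + (-1 : ℝ) ^ b * (1 - 2 * p) ^ B.card) / 2 := by
  have key : ∀ T ∈ B.powerset, (if T.card % 2 = b then wt p B T else 0)
      = wt p B T / 2 + (-1 : ℝ) ^ b * ((-1 : ℝ) ^ T.card * wt p B T) / 2 := by
    intro T _
    rw [neg_one_pow_mod_two T.card]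
    have h2 : T.card % 2 = 0 ∨ T.card % 2 = 1 := by omega
    have hb2 : b = 0 ∨ b = 1 := by omega
    rcases h2 with h | h <;> rcases hb2 with h' | h' <;>
      simp [h, h'] <;> ring
  rw [Finset.sum_congr rfl key, Finset.sum_add_distrib, ← Finset.sum_div, sum_wt]
  have : ∑ T ∈ B.powerset, (-1 : ℝ) ^ b * ((-1 : ℝ) ^ T.card * wt p B T) / 2
      = (-1 : ℝ) ^ b * (∑ T ∈ B.powerset, (-1 : ℝ) ^ T.card * wt p B T) / 2 := by
    simp only [← Finset.sum_div, ← Finset.mul_sum]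
  rw [this, sum_wt_sign]
  ring

lemma sum_powerset_split {M : Type*} [AddCommMonoid M] (B C : Finset ι) (h : Disjoint B C)
    (f : Finset ι → M) :
    ∑ T ∈ (B ∪ C).powerset, f T
      = ∑ T2 ∈ C.powerset, ∑ T1 ∈ B.powerset, f (T1 ∪ T2) := by
  rw [← Finset.sum_product']
  refine Finset.sum_nbij' (fun T => (T ∩ C, T ∩ B)) (fun x => x.2 ∪ x.1) ?_ ?_ ?_ ?_ ?_
  · intro T hT
    simp only [Finset.mem_product, Finset.mem_powerset]
    exact ⟨Finset.inter_subset_right, Finset.inter_subset_right⟩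
  · intro x hx
    simp only [Finset.mem_product, Finset.mem_powerset] at hx
    rw [Finset.mem_powerset]
    exact Finset.union_subset (hx.2.trans Finset.subset_union_left)
      (hx.1.trans Finset.subset_union_right)
  · intro T hT
    rw [Finset.mem_powerset] at hT
    simp only
    rw [← Finset.inter_union_distrib_left, Finset.inter_eq_left.2 hT]
  · intro x hx
    simp only [Finset.mem_product, Finset.mem_powerset] at hx
    have h1 : x.2 ∩ C = ∅ := by
      rw [← Finset.disjoint_iff_inter_eq_empty]
      exact h.mono_left hx.2
    have h2 : x.1 ∩ B = ∅ := by
      rw [← Finset.disjoint_iff_inter_eq_empty]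
      exact h.symm.mono_left hx.1
    have e1 : (x.2 ∪ x.1) ∩ C = x.1 := by
      rw [Finset.union_inter_distrib_right, h1, Finset.empty_union,
        Finset.inter_eq_left.2 hx.1]
    have e2 : (x.2 ∪ x.1) ∩ B = x.2 := by
      rw [Finset.union_inter_distrib_right, h2, Finset.union_empty,
        Finset.inter_eq_left.2 hx.2]
    rw [Prod.ext_iff]
    exact ⟨e1, e2⟩
  · intro T hT
    rw [Finset.mem_powerset] at hT
    simp only
    rw [← Finset.inter_union_distrib_left, Finset.inter_eq_left.2 hT]

lemma ite_and_mul {P Q : Prop} [Decidable P] [Decidable Q] {x y : ℝ} :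
    (if P ∧ Q then x * y else 0) = (if P then x else 0) * (if Q then y else 0) := by
  by_cases hP : P <;> by_cases hQ : Q <;> simp [hP, hQ]

lemma comb_main {t η : ℕ} (p : ℝ) (hp0 : 0 < p) (hp1 : p < 1) (e : ℝ)
    (he : e = |1 - 2 * p| ^ η) :
    ∀ (r : ℕ) (A : Fin r → Finset (Fin t)) (s : Fin r → ℕ), (∀ j, s j ≤ 1) →
    (∀ j : Fin r, η ≤ ((A j) \ ((Finset.univ.filter
        (fun j' : Fin r => j < j')).biUnion A)).card) →
    (∑ T ∈ (Finset.univ : Finset (Fin t)).powerset,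
      if (∀ j, (A j ∩ T).card % 2 = s j) then wt p Finset.univ T else 0)
      ∈ Set.Icc (((1 - e) / 2) ^ r) (((1 + e) / 2) ^ r) := by
  have habs1 : |1 - 2 * p| ≤ 1 := abs_le.2 ⟨by linarith, by linarith⟩
  have he0 : 0 ≤ e := he ▸ pow_nonneg (abs_nonneg _) η
  have he1 : e ≤ 1 := he ▸ pow_le_one₀ (abs_nonneg _) habs1
  intro r
  induction r with
  | zero =>
    intro A s hs hlay
    have h : ∀ T ∈ (Finset.univ : Finset (Fin t)).powerset,
        (if (∀ j : Fin 0, (A j ∩ T).card % 2 = s j) then wt p Finset.univ T else 0)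
          = wt p Finset.univ T := fun T _ => if_pos (fun j => j.elim0)
    rw [Finset.sum_congr rfl h, sum_wt]
    simp
  | succ r IH =>
    intro A s hs hlay
    set c : ℝ := 1 - 2 * p with hc
    set B : Finset (Fin t) := A 0 \ ((Finset.univ.filter
      (fun j' : Fin (r+1) => 0 < j')).biUnion A) with hBdef
    have hcardB : η ≤ B.card := hlay 0
    have hBsub : B ⊆ A 0 := Finset.sdiff_subset
    have hBdisj : ∀ j : Fin r, Disjoint (A j.succ) B := by
      intro j
      refine Finset.disjoint_right.2 fun i hiB hi => ?_
      rw [hBdef, Finset.mem_sdiff] at hiB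
      exact hiB.2 (Finset.mem_biUnion.2 ⟨j.succ,
        Finset.mem_filter.2 ⟨Finset.mem_univ _, j.succ_pos⟩, hi⟩)
    have hUnion : B ∪ (Finset.univ \ B) = (Finset.univ : Finset (Fin t)) :=
      Finset.union_sdiff_of_subset (Finset.subset_univ B)
    have key1 : ∀ (f : Finset (Fin t) → ℝ),
        ∑ T ∈ (Finset.univ : Finset (Fin t)).powerset, f T
          = ∑ T2 ∈ (Finset.univ \ B).powerset, ∑ T1 ∈ B.powerset, f (T1 ∪ T2) := by
      intro f
      conv_lhs => rw [← hUnion]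
      exact sum_powerset_split _ _ Finset.disjoint_sdiff f
    -- basic facts about T1 T2
    have hwtfac : ∀ T2 ∈ (Finset.univ \ B).powerset, ∀ T1 ∈ B.powerset,
        wt p Finset.univ (T1 ∪ T2) = wt p B T1 * wt p (Finset.univ \ B) T2 := by
      intro T2 hT2 T1 hT1
      rw [Finset.mem_powerset] at hT1 hT2
      conv_lhs => rw [← hUnion]
      rw [wt_union Finset.disjoint_sdiff]
      congr 1
      · refine wt_congr fun i hi => ?_
        simp only [Finset.mem_union]
        constructor
        · rintro (h | h)
          · exact h
          · exact absurd (Finset.mem_sdiff.1 (hT2 h)).2 (not_not.2 hi)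
        · exact Or.inl
      · refine wt_congr fun i hi => ?_
        simp only [Finset.mem_union]
        constructor
        · rintro (h | h)
          · exact absurd (hT1 h) (Finset.mem_sdiff.1 hi).2
          · exact h
        · exact Or.inr
    have htailinv : ∀ T2 ∈ (Finset.univ \ B).powerset, ∀ T1 ∈ B.powerset, ∀ j : Fin r,
        A j.succ ∩ (T1 ∪ T2) = A j.succ ∩ T2 := by
      intro T2 hT2 T1 hT1 j
      rw [Finset.mem_powerset] at hT1 hT2
      ext i
      simp only [Finset.mem_inter, Finset.mem_union]
      constructor
      · rintro ⟨hiA, hiT1 | hiT2⟩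
        · exact absurd (hT1 hiT1) (Finset.disjoint_left.1 (hBdisj j) hiA)
        · exact ⟨hiA, hiT2⟩
      · rintro ⟨hiA, hiT2⟩
        exact ⟨hiA, Or.inr hiT2⟩
    -- tail quantities
    have hlay' : ∀ j : Fin r, η ≤ ((A j.succ) \ ((Finset.univ.filter
        (fun j' : Fin r => j < j')).biUnion (fun j' => A j'.succ))).card := by
      intro j
      have hset : ((Finset.univ.filter (fun j' : Fin r => j < j')).biUnion
            (fun j' => A j'.succ))
          = ((Finset.univ.filter (fun j' : Fin (r+1) => j.succ < j')).biUnion A) := by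
        ext i
        simp only [Finset.mem_biUnion, Finset.mem_filter, Finset.mem_univ, true_and]
        constructor
        · rintro ⟨j', hj, hi⟩
          exact ⟨j'.succ, by rwa [Fin.succ_lt_succ_iff], hi⟩
        · rintro ⟨j', hj, hi⟩
          rcases Fin.eq_zero_or_eq_succ j' with h0 | ⟨k, rfl⟩
          · subst h0
            exact absurd hj (Fin.not_lt_zero _)
          · exact ⟨k, Fin.succ_lt_succ_iff.1 hj, hi⟩
      rw [hset]
      exact hlay j.succ
    have IH' := IH (fun j => A j.succ) (fun j => s j.succ) (fun j => hs _) hlay'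
    -- the tail sum equals the sum over T2 only
    have htail : (∑ T ∈ (Finset.univ : Finset (Fin t)).powerset,
        if (∀ j : Fin r, ((A j.succ) ∩ T).card % 2 = s j.succ)
          then wt p Finset.univ T else 0)
        = ∑ T2 ∈ (Finset.univ \ B).powerset,
            (if (∀ j : Fin r, ((A j.succ) ∩ T2).card % 2 = s j.succ)
              then wt p (Finset.univ \ B) T2 else 0) := by
      rw [key1]
      refine Finset.sum_congr rfl fun T2 hT2 => ?_
      have : ∀ T1 ∈ B.powerset,
          (if (∀ j : Fin r, ((A j.succ) ∩ (T1 ∪ T2)).card % 2 = s j.succ)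
            then wt p Finset.univ (T1 ∪ T2) else 0)
          = wt p B T1 * (if (∀ j : Fin r, ((A j.succ) ∩ T2).card % 2 = s j.succ)
              then wt p (Finset.univ \ B) T2 else 0) := by
        intro T1 hT1
        have hiff : (∀ j : Fin r, ((A j.succ) ∩ (T1 ∪ T2)).card % 2 = s j.succ)
            ↔ (∀ j : Fin r, ((A j.succ) ∩ T2).card % 2 = s j.succ) :=
          forall_congr' fun j => by rw [htailinv T2 hT2 T1 hT1 j]
        rw [hwtfac T2 hT2 T1 hT1]
        simp only [hiff]
        split_ifs <;> ring
      rw [Finset.sum_congr rfl this, ← Finset.sum_mul, sum_wt, one_mul]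
    rw [htail] at IH'
    -- main term computation
    have hterm : ∀ T2 ∈ (Finset.univ \ B).powerset,
        (∑ T1 ∈ B.powerset, (if (∀ j : Fin (r+1), (A j ∩ (T1 ∪ T2)).card % 2 = s j)
          then wt p Finset.univ (T1 ∪ T2) else 0))
        = ((1 + (-1 : ℝ) ^ ((s 0 + (A 0 ∩ T2).card) % 2) * c ^ B.card) / 2) *
          (if (∀ j : Fin r, ((A j.succ) ∩ T2).card % 2 = s j.succ)
            then wt p (Finset.univ \ B) T2 else 0) := by
      intro T2 hT2
      have hstep : ∀ T1 ∈ B.powerset,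
          (if (∀ j : Fin (r+1), (A j ∩ (T1 ∪ T2)).card % 2 = s j)
            then wt p Finset.univ (T1 ∪ T2) else 0)
          = (if T1.card % 2 = (s 0 + (A 0 ∩ T2).card) % 2 then wt p B T1 else 0) *
            (if (∀ j : Fin r, ((A j.succ) ∩ T2).card % 2 = s j.succ)
              then wt p (Finset.univ \ B) T2 else 0) := by
        intro T1 hT1
        have hT1' := Finset.mem_powerset.1 hT1
        have hT2' := Finset.mem_powerset.1 hT2
        have hd12 : Disjoint T1 T2 := Finset.disjoint_sdiff.mono hT1' hT2'
        have hA0 : A 0 ∩ (T1 ∪ T2) = T1 ∪ (A 0 ∩ T2) := by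
          ext i
          simp only [Finset.mem_inter, Finset.mem_union]
          constructor
          · rintro ⟨hiA, hiT1 | hiT2⟩
            · exact Or.inl hiT1
            · exact Or.inr ⟨hiA, hiT2⟩
          · rintro (hiT1 | ⟨hiA, hiT2⟩)
            · exact ⟨hBsub (hT1' hiT1), Or.inl hiT1⟩
            · exact ⟨hiA, Or.inr hiT2⟩
        have hhead : ((A 0 ∩ (T1 ∪ T2)).card % 2 = s 0)
            ↔ (T1.card % 2 = (s 0 + (A 0 ∩ T2).card) % 2) := by
          rw [hA0, Finset.card_union_of_disjoint
            (hd12.mono_right Finset.inter_subset_right)]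
          have := hs 0
          omega
        have hcond : (∀ j : Fin (r+1), (A j ∩ (T1 ∪ T2)).card % 2 = s j)
            ↔ ((T1.card % 2 = (s 0 + (A 0 ∩ T2).card) % 2)
              ∧ (∀ j : Fin r, ((A j.succ) ∩ T2).card % 2 = s j.succ)) := by
          rw [Fin.forall_fin_succ]
          exact and_congr hhead (forall_congr' fun j => by
            rw [htailinv T2 hT2 T1 hT1 j])
        rw [hwtfac T2 hT2 T1 hT1, if_congr hcond rfl rfl, ite_and_mul]
      rw [Finset.sum_congr rfl hstep, ← Finset.sum_mul,
        sum_wt_parity p B _ (by omega)]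
    -- put together
    set I : Finset (Fin t) → ℝ := fun T2 =>
      (1 + (-1 : ℝ) ^ ((s 0 + (A 0 ∩ T2).card) % 2) * c ^ B.card) / 2 with hI
    set h : Finset (Fin t) → ℝ := fun T2 =>
      (if (∀ j : Fin r, ((A j.succ) ∩ T2).card % 2 = s j.succ)
        then wt p (Finset.univ \ B) T2 else 0) with hh
    have hh0 : ∀ T2, 0 ≤ h T2 := by
      intro T2
      rw [hh]
      dsimp only
      split
      · exact wt_nonneg hp0.le hp1.le _ _
      · exact le_refl 0
    have hIbound : ∀ T2, (1 - e) / 2 ≤ I T2 ∧ I T2 ≤ (1 + e) / 2 := by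
      intro T2
      have habs : |(-1 : ℝ) ^ ((s 0 + (A 0 ∩ T2).card) % 2) * c ^ B.card| ≤ e := by
        rw [abs_mul, abs_pow, abs_pow, abs_neg, abs_one, one_pow, one_mul, he]
        exact pow_le_pow_of_le_one (abs_nonneg _) habs1 hcardB
      rw [abs_le] at habs
      constructor <;> rw [hI] <;> dsimp only <;> linarith [habs.1, habs.2]
    have hmain : (∑ T ∈ (Finset.univ : Finset (Fin t)).powerset,
        if (∀ j : Fin (r+1), (A j ∩ T).card % 2 = s j) then wt p Finset.univ T else 0)
        = ∑ T2 ∈ (Finset.univ \ B).powerset, I T2 * h T2 := by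
      rw [key1]
      exact Finset.sum_congr rfl hterm
    rw [hmain]
    obtain ⟨hIHl, hIHu⟩ := IH'
    constructor
    · calc ((1 - e) / 2) ^ (r + 1) = (1 - e) / 2 * ((1 - e) / 2) ^ r := by ring
      _ ≤ (1 - e) / 2 * ∑ T2 ∈ (Finset.univ \ B).powerset, h T2 :=
          mul_le_mul_of_nonneg_left hIHl (by linarith)
      _ = ∑ T2 ∈ (Finset.univ \ B).powerset, (1 - e) / 2 * h T2 := Finset.mul_sum _ _ _
      _ ≤ ∑ T2 ∈ (Finset.univ \ B).powerset, I T2 * h T2 :=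
          Finset.sum_le_sum fun T2 _ =>
            mul_le_mul_of_nonneg_right (hIbound T2).1 (hh0 T2)
    · calc (∑ T2 ∈ (Finset.univ \ B).powerset, I T2 * h T2)
          ≤ ∑ T2 ∈ (Finset.univ \ B).powerset, (1 + e) / 2 * h T2 :=
          Finset.sum_le_sum fun T2 _ =>
            mul_le_mul_of_nonneg_right (hIbound T2).2 (hh0 T2)
      _ = (1 + e) / 2 * ∑ T2 ∈ (Finset.univ \ B).powerset, h T2 :=
          (Finset.mul_sum _ _ _).symm
      _ ≤ (1 + e) / 2 * ((1 + e) / 2) ^ r :=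
          mul_le_mul_of_nonneg_left hIHu (by linarith)
      _ = ((1 + e) / 2) ^ (r + 1) := by ring

end Stmt1Aux


namespace Stmt1Aux

theorem meas_eq {Ω : Type*} [MeasurableSpace Ω] (μ : Measure Ω) [IsProbabilityMeasure μ]
    (p : ℝ) (hp0 : 0 ≤ p) (hp1 : p ≤ 1) (t r : ℕ)
    (X : Fin t → Ω → ℕ)
    (hmeas : ∀ i, Measurable (X i))
    (hval : ∀ i ω, X i ω ≤ 1)
    (hber : ∀ i, μ {ω | X i ω = 1} = ENNReal.ofReal p)
    (hind : iIndepFun X μ)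
    (A : Fin r → Finset (Fin t)) (s : Fin r → ℕ) :
    μ {ω | ∀ j : Fin r, (∑ i ∈ A j, X i ω) % 2 = s j}
      = ENNReal.ofReal (∑ T ∈ (Finset.univ : Finset (Fin t)).powerset,
          if (∀ j, (A j ∩ T).card % 2 = s j) then wt p Finset.univ T else 0) := by
  set atom : Finset (Fin t) → Set Ω :=
    fun T => ⋂ i, X i ⁻¹' {if i ∈ T then 1 else 0} with hatomdef
  have hmem : ∀ (ω : Ω) (T : Finset (Fin t)),
      ω ∈ atom T ↔ ∀ i, X i ω = (if i ∈ T then 1 else 0) := by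
    intro ω T
    simp [hatomdef]
  have hatomT : ∀ (ω : Ω) (T : Finset (Fin t)), ω ∈ atom T →
      T = Finset.univ.filter (fun i => X i ω = 1) := by
    intro ω T hω
    rw [hmem] at hω
    ext i
    simp only [Finset.mem_filter, Finset.mem_univ, true_and]
    constructor
    · intro hi
      rw [hω i, if_pos hi]
    · intro hi
      by_contra hiT
      rw [hω i, if_neg hiT] at hi
      exact one_ne_zero hi.symm
  have hOmega : ∀ ω : Ω, ω ∈ atom (Finset.univ.filter (fun i => X i ω = 1)) := by
    intro ω
    rw [hmem]
    intro i
    have := hval i ω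
    by_cases h : X i ω = 1 <;> simp [Finset.mem_filter, h] <;> omega
  have hsum : ∀ (ω : Ω) (F : Finset (Fin t)),
      (∑ i ∈ F, X i ω) = (F ∩ Finset.univ.filter (fun i => X i ω = 1)).card := by
    intro ω F
    have h1 : ∀ i ∈ F, X i ω = if X i ω = 1 then 1 else 0 := by
      intro i _
      have := hval i ω
      split <;> omega
    rw [Finset.sum_congr rfl h1, Finset.sum_boole]
    norm_cast
    congr 1
    ext i
    simp [Finset.mem_filter]
  have hE : {ω | ∀ j : Fin r, (∑ i ∈ A j, X i ω) % 2 = s j}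
      = ⋃ T ∈ (Finset.univ : Finset (Finset (Fin t))).filter
          (fun T => ∀ j, (A j ∩ T).card % 2 = s j), atom T := by
    ext ω
    simp only [Set.mem_setOf_eq, Set.mem_iUnion, exists_prop, Finset.mem_filter,
      Finset.mem_univ, true_and]
    constructor
    · intro h
      refine ⟨Finset.univ.filter (fun i => X i ω = 1), fun j => ?_, hOmega ω⟩
      rw [← hsum ω (A j)]
      exact h j
    · rintro ⟨T, hcond, hω⟩
      intro j
      rw [hsum ω (A j), ← hatomT ω T hω]
      exact hcond j
  have hatom_meas : ∀ T, MeasurableSet (atom T) :=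
    fun T => MeasurableSet.iInter fun i => hmeas i (measurableSet_singleton _)
  have hdisj : (((Finset.univ : Finset (Finset (Fin t))).filter
      (fun T => ∀ j, (A j ∩ T).card % 2 = s j)) : Set (Finset (Fin t))).PairwiseDisjoint atom := by
    intro T _ T' _ hne
    refine Set.disjoint_left.2 fun ω hω hω' => ?_
    exact hne ((hatomT ω T hω).trans (hatomT ω T' hω').symm)
  have hatom_val : ∀ T : Finset (Fin t),
      μ (atom T) = ENNReal.ofReal (wt p Finset.univ T) := by
    intro T
    have hpre : ∀ i : Fin t, μ (X i ⁻¹' {if i ∈ T then 1 else 0})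
        = ENNReal.ofReal (if i ∈ T then p else 1 - p) := by
      intro i
      have h1 : X i ⁻¹' {1} = {ω | X i ω = 1} := by
        ext ω; simp
      by_cases h : i ∈ T
      · rw [if_pos h, if_pos h, h1, hber i]
      · rw [if_neg h, if_neg h]
        have h0 : X i ⁻¹' {0} = {ω | X i ω = 1}ᶜ := by
          ext ω
          have := hval i ω
          simp only [Set.mem_preimage, Set.mem_singleton_iff, Set.mem_compl_iff,
            Set.mem_setOf_eq]
          omega
        rw [h0, measure_compl (h1 ▸ hmeas i (measurableSet_singleton 1))
          (measure_ne_top μ _), hber i, measure_univ]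
        rw [ENNReal.ofReal_sub _ hp0, ENNReal.ofReal_one]
    rw [hatomdef]
    rw [hind.meas_iInter (fun i => ⟨{if i ∈ T then 1 else 0},
      measurableSet_singleton _, rfl⟩)]
    rw [Finset.prod_congr rfl (fun i _ => hpre i),
      ← ENNReal.ofReal_prod_of_nonneg (fun i _ => by split <;> linarith)]
    rfl
  rw [hE, measure_biUnion_finset hdisj (fun T _ => hatom_meas T),
    Finset.sum_congr rfl (fun T _ => hatom_val T),
    ← ENNReal.ofReal_sum_of_nonneg (fun T _ => wt_nonneg hp0 hp1 _ _)]
  congr 1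
  rw [Finset.sum_filter, Finset.powerset_univ]

end Stmt1Aux

theorem stmt1 {Ω : Type*} [MeasurableSpace Ω] (μ : Measure Ω) [IsProbabilityMeasure μ]
    (p : ℝ) (hp0 : 0 < p) (hp1 : p < 1) (t r η : ℕ)
    (X : Fin t → Ω → ℕ)
    (hmeas : ∀ i, Measurable (X i))
    (hval : ∀ i ω, X i ω ≤ 1)
    (hber : ∀ i, μ {ω | X i ω = 1} = ENNReal.ofReal p)
    (hind : iIndepFun X μ)
    (pstar : ℝ) (hpstar : pstar = min p (1 - p))
    (A : Fin r → Finset (Fin t))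
    (hlayered : ∀ j : Fin r,
      η ≤ ((A j) \ ((Finset.univ.filter (fun j' : Fin r => j < j')).biUnion A)).card)
    (hsmall : r * Real.exp (-2 * η * pstar) < 1) :
    ∀ s : Fin r → ℕ, (∀ j, s j ≤ 1) →
      (μ {ω | ∀ j : Fin r, (∑ i ∈ A j, X i ω) % 2 = s j}).toReal ∈
        Set.Icc ((1 - r * Real.exp (-2 * η * pstar)) / 2 ^ r)
                ((1 - r * Real.exp (-2 * η * pstar))⁻¹ / 2 ^ r) := by
  intro s hs
  set ε : ℝ := Real.exp (-2 * η * pstar) with hε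
  set e : ℝ := |1 - 2 * p| ^ η with he
  have hps1 : pstar ≤ p := hpstar ▸ min_le_left _ _
  have hps2 : pstar ≤ 1 - p := hpstar ▸ min_le_right _ _
  have hps0 : 0 < pstar := by rw [hpstar]; exact lt_min hp0 (by linarith)
  have habs : |1 - 2 * p| = 1 - 2 * pstar := by
    rcases le_total p (1 - p) with h | h
    · rw [hpstar, min_eq_left h, abs_of_nonneg (by linarith)]
    · rw [hpstar, min_eq_right h, abs_of_nonpos (by linarith)]; ring
  have hεe : e ≤ ε := by
    rw [he, habs, hε]
    have h1 : 1 - 2 * pstar ≤ Real.exp (-(2 * pstar)) := by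
      have := Real.add_one_le_exp (-(2 * pstar)); linarith
    calc (1 - 2*pstar)^η ≤ (Real.exp (-(2*pstar)))^η :=
        pow_le_pow_left₀ (by linarith) h1 η
      _ = Real.exp (-2 * η * pstar) := by
        rw [← Real.exp_nat_mul]; ring_nf
  have he0 : (0:ℝ) ≤ e := he ▸ pow_nonneg (abs_nonneg _) η
  have he1 : e ≤ 1 := he ▸ pow_le_one₀ (abs_nonneg _)
    (abs_le.2 ⟨by linarith, by linarith⟩)
  have hεpos : 0 < ε := Real.exp_pos _
  have hcomb := Stmt1Aux.comb_main p hp0 hp1 e he r A s hs hlayered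
  rw [Stmt1Aux.meas_eq μ p hp0.le hp1.le t r X hmeas hval hber hind A s,
    ENNReal.toReal_ofReal (Finset.sum_nonneg fun T _ => by
      split
      · exact Stmt1Aux.wt_nonneg hp0.le hp1.le _ _
      · exact le_refl 0)]
  obtain ⟨hl, hu⟩ := hcomb
  rw [Set.mem_Icc]
  constructor
  · refine le_trans ?_ hl
    rw [div_pow]
    have key : 1 - (r:ℝ) * ε ≤ (1 - e)^r := by
      have h2 : (1:ℝ) + r * (-e) ≤ (1 + (-e))^r := one_add_mul_le_pow (by linarith) r
      have h3 : (r:ℝ) * e ≤ r * ε := mul_le_mul_of_nonneg_left hεe (Nat.cast_nonneg r)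
      have h4 : ((1:ℝ) + (-e))^r = (1 - e)^r := by ring_nf
      linarith
    gcongr
  · refine le_trans hu ?_
    rw [div_pow]
    have key : (1+e)^r ≤ (1 - (r:ℝ)*ε)⁻¹ := by
      rcases Nat.eq_zero_or_pos r with rfl | hr
      · simp
      · have hε1 : ε < 1 := by
          have : ε ≤ (r:ℝ) * ε :=
            le_mul_of_one_le_left hεpos.le (by exact_mod_cast hr)
          linarith
        have hpos : 0 < 1 - (r:ℝ)*ε := by linarith
        rw [inv_eq_one_div, le_div_iff₀ hpos]
        have h1 : (1+e)^r ≤ (1+ε)^r := pow_le_pow_left₀ (by linarith) (by linarith) r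
        have h2 : 1 - (r:ℝ)*ε ≤ (1-ε)^r := by
          have h2a := one_add_mul_le_pow (show (-2:ℝ) ≤ -ε by linarith) r
          have h2b : ((1:ℝ) + (-ε))^r = (1 - ε)^r := by ring_nf
          linarith
        have h3 : (1+e)^r * (1 - (r:ℝ)*ε) ≤ (1+ε)^r * (1-ε)^r :=
          mul_le_mul h1 h2 hpos.le (by positivity)
        have h4 : ((1:ℝ)+ε)^r * (1-ε)^r = (1 - ε^2)^r := by
          rw [← mul_pow]; ring_nf
        have h5 : ((1:ℝ) - ε^2)^r ≤ 1 := pow_le_one₀ (by nlinarith) (by nlinarith)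
        nlinarith
    gcongr
end

section
/- Let X_1,…,X_t be {0,1}-valued random variables, 1 ≤ k < t, T = {k+1,…,t}, with X = (X_1,…,X_k) and X' = (X_{k+1},…,X_t) independent. For subsets A_1,…,A_r ⊆ [t], define Y_j = Σ_{i∈A_j} X_i mod 2 and Z_j = Σ_{i∈A_j∩T} X_i mod 2. Suppose Z = (Z_1,…,Z_r) is ε-uniform with ε < 1/2. Then for every x ∈ {0,1}^k and every y ∈ {0,1}^r with P[Y = y] > 0, one has (1−2ε)·P[X = x] ≤ P[X = x | Y = y] ≤ (1−2ε)^{−1}·P[X = x]. -/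
open MeasureTheory ProbabilityTheory

theorem stmt3 {Ω : Type*} [MeasurableSpace Ω] (μ : Measure Ω) [IsProbabilityMeasure μ]
    (k l r : ℕ) (hk : 1 ≤ k) (hl : 1 ≤ l)
    (X : Fin (k + l) → Ω → ℕ)
    (hmeas : ∀ i, Measurable (X i))
    (hval : ∀ i ω, X i ω ≤ 1)
    (hindep : IndepFun (fun ω (i : Fin k) => X (Fin.castAdd l i) ω)
                       (fun ω (i : Fin l) => X (Fin.natAdd k i) ω) μ)
    (A : Fin r → Finset (Fin (k + l))) (ε : ℝ) (hε : ε < 1 / 2)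
    (hZ : ∀ s : Fin r → ℕ, (∀ j, s j ≤ 1) →
      (μ {ω | ∀ j : Fin r,
          (∑ i ∈ (A j).filter (fun i : Fin (k + l) => k ≤ (i : ℕ)), X i ω) % 2 = s j}).toReal ∈
        Set.Icc ((1 - ε) / 2 ^ r) ((1 - ε)⁻¹ / 2 ^ r)) :
    ∀ x : Fin k → ℕ, (∀ i, x i ≤ 1) →
    ∀ y : Fin r → ℕ, (∀ j, y j ≤ 1) →
      μ {ω | ∀ j : Fin r, (∑ i ∈ A j, X i ω) % 2 = y j} ≠ 0 →
      ((1 - 2 * ε) * (μ {ω | ∀ i : Fin k, X (Fin.castAdd l i) ω = x i}).toReal ≤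
        ((μ[|{ω | ∀ j : Fin r, (∑ i ∈ A j, X i ω) % 2 = y j}])
          {ω | ∀ i : Fin k, X (Fin.castAdd l i) ω = x i}).toReal ∧
       ((μ[|{ω | ∀ j : Fin r, (∑ i ∈ A j, X i ω) % 2 = y j}])
          {ω | ∀ i : Fin k, X (Fin.castAdd l i) ω = x i}).toReal ≤
        (1 - 2 * ε)⁻¹ * (μ {ω | ∀ i : Fin k, X (Fin.castAdd l i) ω = x i}).toReal) := by
  intro x hx y hy hB0
  classical
  set B : Set Ω := {ω | ∀ j : Fin r, (∑ i ∈ A j, X i ω) % 2 = y j} with hBdef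
  set Cs : (Fin r → ℕ) → Set Ω := fun s =>
    {ω | ∀ j : Fin r,
      (∑ i ∈ (A j).filter (fun i : Fin (k + l) => k ≤ (i : ℕ)), X i ω) % 2 = s j} with hCdef
  set Ev : (Fin k → Fin 2) → Set Ω := fun v =>
    {ω | ∀ i : Fin k, X (Fin.castAdd l i) ω = (v i : ℕ)} with hEdef
  have hlt : ∀ i : Fin (k + l), (i : ℕ) - k < l := fun i => by
    have := i.isLt; omega
  set cmap : Fin (k + l) → Fin k := fun i => ⟨min (i : ℕ) (k - 1), by omega⟩ with hcmap
  set zf : (Fin k → Fin 2) → Fin r → ℕ := fun v j =>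
    (y j + ∑ i ∈ (A j).filter (fun i : Fin (k + l) => (i : ℕ) < k), (v (cmap i) : ℕ)) % 2
    with hzf
  -- measurability
  have msum : ∀ (T : Finset (Fin (k + l))) (c : ℕ),
      MeasurableSet {ω | (∑ i ∈ T, X i ω) % 2 = c} := by
    intro T c
    have h1 : Measurable fun ω => (∑ i ∈ T, X i ω) % 2 :=
      (measurable_from_top (f := fun n : ℕ => n % 2)).comp
        (Finset.measurable_sum T fun i _ => hmeas i)
    exact h1 (measurableSet_singleton c)
  have mB : MeasurableSet B := by
    have : B = ⋂ j, {ω | (∑ i ∈ A j, X i ω) % 2 = y j} := by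
      ext ω; simp [hBdef, Set.mem_iInter]
    rw [this]; exact MeasurableSet.iInter fun j => msum _ _
  have mCs : ∀ s, MeasurableSet (Cs s) := by
    intro s
    have : Cs s = ⋂ j, {ω |
        (∑ i ∈ (A j).filter (fun i : Fin (k + l) => k ≤ (i : ℕ)), X i ω) % 2 = s j} := by
      ext ω; simp [hCdef, Set.mem_iInter]
    rw [this]; exact MeasurableSet.iInter fun j => msum _ _
  have mEv : ∀ v, MeasurableSet (Ev v) := by
    intro v
    have : Ev v = ⋂ i, {ω | X (Fin.castAdd l i) ω = (v i : ℕ)} := by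
      ext ω; simp [hEdef, Set.mem_iInter]
    rw [this]
    exact MeasurableSet.iInter fun i => (hmeas _) (measurableSet_singleton _)
  -- independence consequence
  rw [indepFun_iff_measure_inter_preimage_eq_mul] at hindep
  have hindep' : ∀ v s, μ (Ev v ∩ Cs s) = μ (Ev v) * μ (Cs s) := by
    intro v s
    have hSv : Ev v = (fun ω (i : Fin k) => X (Fin.castAdd l i) ω) ⁻¹'
        {f : Fin k → ℕ | ∀ i, f i = (v i : ℕ)} := rfl
    set D : Set (Fin l → ℕ) := {g | ∀ j,
        (∑ i ∈ (A j).filter (fun i : Fin (k + l) => k ≤ (i : ℕ)),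
          g ⟨(i : ℕ) - k, hlt i⟩) % 2 = s j} with hD
    have hCsG : Cs s = (fun ω (i : Fin l) => X (Fin.natAdd k i) ω) ⁻¹' D := by
      ext ω
      simp only [hCdef, hD, Set.mem_preimage, Set.mem_setOf_eq]
      refine forall_congr' fun j => ?_
      have hcong : ∀ i ∈ (A j).filter (fun i : Fin (k + l) => k ≤ (i : ℕ)),
          X (Fin.natAdd k ⟨(i : ℕ) - k, hlt i⟩) ω = X i ω := by
        intro i hi
        rw [Finset.mem_filter] at hi
        congr 1
        exact Fin.ext (by simp [Fin.natAdd]; omega)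
      rw [Finset.sum_congr rfl hcong]
    have mSv : MeasurableSet {f : Fin k → ℕ | ∀ i, f i = (v i : ℕ)} := by
      have : {f : Fin k → ℕ | ∀ i, f i = (v i : ℕ)}
          = ⋂ i, (fun f : Fin k → ℕ => f i) ⁻¹' {(v i : ℕ)} := by
        ext f; simp [Set.mem_iInter]
      rw [this]
      exact MeasurableSet.iInter fun i =>
        (measurable_pi_apply i) (measurableSet_singleton _)
    have mD : MeasurableSet D := by
      have : D = ⋂ j, (fun g : Fin l → ℕ =>
          (∑ i ∈ (A j).filter (fun i : Fin (k + l) => k ≤ (i : ℕ)),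
            g ⟨(i : ℕ) - k, hlt i⟩) % 2) ⁻¹' {s j} := by
        ext g; simp [hD, Set.mem_iInter]
      rw [this]
      exact MeasurableSet.iInter fun j =>
        ((measurable_from_top (f := fun n : ℕ => n % 2)).comp
          (Finset.measurable_sum _ fun i _ => measurable_pi_apply _))
          (measurableSet_singleton _)
    rw [hSv, hCsG]
    exact hindep _ _ mSv mD
  -- key event equality
  have key : ∀ v : Fin k → Fin 2, Ev v ∩ B = Ev v ∩ Cs (zf v) := by
    intro v
    ext ω
    simp only [hBdef, hCdef, hEdef, Set.mem_inter_iff, Set.mem_setOf_eq]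
    refine and_congr_right fun hω => forall_congr' fun j => ?_
    have hsplit : ∑ i ∈ A j, X i ω =
        (∑ i ∈ (A j).filter (fun i : Fin (k + l) => (i : ℕ) < k), X i ω)
        + ∑ i ∈ (A j).filter (fun i : Fin (k + l) => k ≤ (i : ℕ)), X i ω := by
      rw [← Finset.sum_filter_add_sum_filter_not (A j)
        (fun i : Fin (k + l) => (i : ℕ) < k) (fun i => X i ω)]
      congr 2
      apply Finset.filter_congr
      intro i _
      simp [not_lt]
    have hS1 : ∑ i ∈ (A j).filter (fun i : Fin (k + l) => (i : ℕ) < k), X i ω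
        = ∑ i ∈ (A j).filter (fun i : Fin (k + l) => (i : ℕ) < k), (v (cmap i) : ℕ) := by
      apply Finset.sum_congr rfl
      intro i hi
      rw [Finset.mem_filter] at hi
      have hcast : Fin.castAdd l (cmap i) = i := by
        apply Fin.ext
        simp [hcmap, Fin.castAdd]
        omega
      have hvv := hω (cmap i)
      rwa [hcast] at hvv
    rw [hsplit, hS1]
    simp only [hzf]
    have hyj := hy j
    omega
  -- partition facts
  have hcover : B = ⋃ v : Fin k → Fin 2, (Ev v ∩ B) := by
    ext ω
    simp only [Set.mem_iUnion, Set.mem_inter_iff]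
    constructor
    · intro h
      refine ⟨fun i => ⟨X (Fin.castAdd l i) ω, ?_⟩, fun i => rfl, h⟩
      have := hval (Fin.castAdd l i) ω; omega
    · rintro ⟨v, _, h⟩; exact h
  have hdisjEv : Pairwise (Function.onFun Disjoint Ev) := by
    intro v v' hne
    simp only [Function.onFun, Set.disjoint_left, hEdef]
    intro ω h1 h2
    apply hne
    funext i
    exact Fin.ext ((h1 i).symm.trans (h2 i))
  have hdisj : Pairwise (Function.onFun Disjoint fun v => Ev v ∩ B) := fun v v' hne =>
    ((hdisjEv hne).mono Set.inter_subset_left Set.inter_subset_left)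
  have hμB : μ B = ∑ v : Fin k → Fin 2, μ (Ev v) * μ (Cs (zf v)) := by
    conv_lhs => rw [hcover]
    rw [measure_iUnion hdisj (fun v => (mEv v).inter mB), tsum_fintype]
    exact Finset.sum_congr rfl fun v _ => by rw [key v, hindep' v (zf v)]
  have hsum1 : ∑ v : Fin k → Fin 2, μ (Ev v) = 1 := by
    have hu : (⋃ v, Ev v) = Set.univ := by
      ext ω
      simp only [Set.mem_iUnion, Set.mem_univ, iff_true, hEdef, Set.mem_setOf_eq]
      refine ⟨fun i => ⟨X (Fin.castAdd l i) ω, ?_⟩, fun i => rfl⟩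
      have := hval (Fin.castAdd l i) ω; omega
    rw [← tsum_fintype (L := SummationFilter.unconditional _), ← measure_iUnion hdisjEv mEv, hu, measure_univ]
  -- real arithmetic setup
  have hzle : ∀ v j, zf v j ≤ 1 := by
    intro v j; simp only [hzf]; omega
  have hq := fun v => hZ (zf v) (hzle v)
  have hBr : (μ B).toReal = ∑ v : Fin k → Fin 2,
      (μ (Ev v)).toReal * (μ (Cs (zf v))).toReal := by
    rw [hμB, ENNReal.toReal_sum (fun v _ =>
      ENNReal.mul_ne_top (measure_ne_top μ _) (measure_ne_top μ _))]
    exact Finset.sum_congr rfl fun v _ => ENNReal.toReal_mul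
  have hPr : ∑ v : Fin k → Fin 2, (μ (Ev v)).toReal = 1 := by
    have h := congrArg ENNReal.toReal hsum1
    rwa [ENNReal.toReal_sum (fun v _ => measure_ne_top μ _), ENNReal.toReal_one] at h
  have hεu : (0:ℝ) < 1 - ε := by linarith
  have htp : (0:ℝ) < 2 ^ r := by positivity
  have hblo : (1 - ε) / 2 ^ r ≤ (μ B).toReal := by
    rw [hBr]
    calc (1 - ε) / 2 ^ r = ∑ v : Fin k → Fin 2, (μ (Ev v)).toReal * ((1 - ε) / 2 ^ r) := by
          rw [← Finset.sum_mul, hPr, one_mul]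
      _ ≤ _ := Finset.sum_le_sum fun v _ =>
          mul_le_mul_of_nonneg_left (hq v).1 ENNReal.toReal_nonneg
  have hbhi : (μ B).toReal ≤ (1 - ε)⁻¹ / 2 ^ r := by
    rw [hBr]
    calc ∑ v : Fin k → Fin 2, (μ (Ev v)).toReal * (μ (Cs (zf v))).toReal
        ≤ ∑ v : Fin k → Fin 2, (μ (Ev v)).toReal * ((1 - ε)⁻¹ / 2 ^ r) :=
          Finset.sum_le_sum fun v _ =>
            mul_le_mul_of_nonneg_left (hq v).2 ENNReal.toReal_nonneg
      _ = (1 - ε)⁻¹ / 2 ^ r := by rw [← Finset.sum_mul, hPr, one_mul]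
  -- specialize to x
  set vx : Fin k → Fin 2 := fun i => ⟨x i, by have := hx i; omega⟩ with hvx
  have hEx : {ω | ∀ i : Fin k, X (Fin.castAdd l i) ω = x i} = Ev vx := by
    ext ω; simp [hEdef, hvx]
  rw [hEx, cond_apply mB μ (Ev vx), Set.inter_comm, key vx, hindep' vx (zf vx),
    ENNReal.toReal_mul, ENNReal.toReal_mul, ENNReal.toReal_inv]
  set p := (μ (Ev vx)).toReal with hp
  set q := (μ (Cs (zf vx))).toReal with hqd
  set b := (μ B).toReal with hb
  have hp0 : 0 ≤ p := ENNReal.toReal_nonneg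
  have hq0 : 0 ≤ q := ENNReal.toReal_nonneg
  have hbpos : 0 < b := lt_of_lt_of_le (by positivity) hblo
  have hd : (0:ℝ) < 1 - 2 * ε := by linarith
  have hqlo : (1 - ε) / 2 ^ r ≤ q := (hq vx).1
  have hqhi : q ≤ (1 - ε)⁻¹ / 2 ^ r := (hq vx).2
  have hinv : (1 - ε) * (1 - ε)⁻¹ = 1 := mul_inv_cancel₀ (ne_of_gt hεu)
  have hbhi' : b * ((1 - ε) * 2 ^ r) ≤ 1 := by
    have := mul_le_mul_of_nonneg_right hbhi (le_of_lt (mul_pos hεu htp))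
    calc b * ((1 - ε) * 2 ^ r) ≤ (1 - ε)⁻¹ / 2 ^ r * ((1 - ε) * 2 ^ r) := this
      _ = 1 := by field_simp
  have hqhi' : q * ((1 - ε) * 2 ^ r) ≤ 1 := by
    have := mul_le_mul_of_nonneg_right hqhi (le_of_lt (mul_pos hεu htp))
    calc q * ((1 - ε) * 2 ^ r) ≤ (1 - ε)⁻¹ / 2 ^ r * ((1 - ε) * 2 ^ r) := this
      _ = 1 := by field_simp
  have hqlo' : 1 - ε ≤ q * 2 ^ r := by
    have := mul_le_mul_of_nonneg_right hqlo (le_of_lt htp)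
    calc (1 - ε) = (1 - ε) / 2 ^ r * 2 ^ r := by field_simp
      _ ≤ q * 2 ^ r := this
  have hblo' : 1 - ε ≤ b * 2 ^ r := by
    have := mul_le_mul_of_nonneg_right hblo (le_of_lt htp)
    calc (1 - ε) = (1 - ε) / 2 ^ r * 2 ^ r := by field_simp
      _ ≤ b * 2 ^ r := this
  have h1 : (1 - 2 * ε) * b ≤ q := by
    nlinarith [mul_pos hεu htp, sq_nonneg ε, mul_le_mul hbhi' (le_refl ((1-2*ε))) (le_of_lt hd) zero_le_one]
  have h2 : (1 - 2 * ε) * q ≤ b := by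
    nlinarith [mul_pos hεu htp, sq_nonneg ε]
  constructor
  · rw [inv_mul_eq_div, le_div_iff₀ hbpos]
    nlinarith [mul_le_mul_of_nonneg_left h1 hp0]
  · rw [inv_mul_eq_div, inv_mul_eq_div, div_le_div_iff₀ hbpos hd]
    nlinarith [mul_le_mul_of_nonneg_left h2 hp0]
end

section
/- Let A and B be disjoint finite vertex sets with |A| ≥ 1, and fix an ordering b_1,…,b_m of B with m ≥ 2. For bipartite graphs H on A ⊔ B, fix 1 ≤ i ≤ m−1 and a nonempty subset A' ⊆ A with a fixed ordering a_1,…,a_{|A'|}. Consider the set S of bipartite graphs H on A ⊔ B in which b_i and b_{i+1} have distinct neighborhoods within A'. Define f: S → S by: letting k be the smallest index such that exactly one of b_i a_k, b_{i+1} a_k is an edge of H, f(H) is obtained from H by toggling both b_i a_k and b_{i+1} a_k (making the edge a non-edge and vice versa). Then f is an involution (f(f(H)) = H for all H ∈ S); it preserves the total number of edges; it preserves the degree parity of every vertex in A and every vertex of B other than b_i and b_{i+1}; and it flips the degree parities of both b_i and b_{i+1}. -/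
/-- Toggle the potential edge between `b_j` and `x` in a bipartite graph,
represented as a function `Fin m → α → Bool` (B-side indexed by `Fin m`,
A-side the type `α`). -/
def toggleEdge {α : Type*} [DecidableEq α] {m : ℕ}
    (H : Fin m → α → Bool) (j : Fin m) (x : α) : Fin m → α → Bool :=
  fun j' x' => if j' = j ∧ x' = x then !(H j' x') else H j' x'

/-- The set of indices `k` such that exactly one of `b_i a_k`, `b_{i+1} a_k`
is an edge of `H`, where `a : Fin n → α` enumerates the subset `A'`. -/
def diffIdx {α : Type*} {m n : ℕ}
    (H : Fin m → α → Bool) (i i' : Fin m) (a : Fin n → α) : Finset (Fin n) :=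
  Finset.univ.filter fun k => H i (a k) ≠ H i' (a k)

/-- The switching map: toggle both `b_i a_k` and `b_{i+1} a_k` for the smallest
index `k` on which the neighborhoods of `b_i` and `b_{i+1}` in `A'` differ. -/
def swapMap {α : Type*} [DecidableEq α] {m n : ℕ}
    (H : Fin m → α → Bool) (i i' : Fin m) (a : Fin n → α) : Fin m → α → Bool :=
  if h : (diffIdx H i i' a).Nonempty then
    toggleEdge (toggleEdge H i (a ((diffIdx H i i' a).min' h))) i'
      (a ((diffIdx H i i' a).min' h))
  else H

def dtog {α : Type*} [DecidableEq α] {m : ℕ}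
    (H : Fin m → α → Bool) (i i' : Fin m) (x : α) : Fin m → α → Bool :=
  fun j y => if j = i ∧ y = x then !(H j y) else if j = i' ∧ y = x then !(H j y) else H j y

lemma parity_flip {β : Type*} [Fintype β] [DecidableEq β] (f : β → Bool) (t : β) :
    (Finset.univ.filter fun y => (if y = t then !f y else f y) = true).card % 2 ≠
      (Finset.univ.filter fun y => f y = true).card % 2 := by
  cases h : f t with
  | true =>
    have hset : (Finset.univ.filter fun y => (if y = t then !f y else f y) = true)
        = (Finset.univ.filter fun y => f y = true).erase t := by
      ext y
      by_cases hy : y = t <;> simp [hy, h]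
    have ht : t ∈ Finset.univ.filter fun y => f y = true := by simp [h]
    have hpos : 0 < (Finset.univ.filter fun y => f y = true).card := Finset.card_pos.mpr ⟨t, ht⟩
    rw [hset, Finset.card_erase_of_mem ht]
    omega
  | false =>
    have hset : (Finset.univ.filter fun y => (if y = t then !f y else f y) = true)
        = insert t (Finset.univ.filter fun y => f y = true) := by
      ext y
      by_cases hy : y = t <;> simp [hy, h]
    have ht : t ∉ Finset.univ.filter fun y => f y = true := by simp [h]
    rw [hset, Finset.card_insert_of_notMem ht]
    omega

lemma swapMap_eq {α : Type*} [DecidableEq α] {m n : ℕ}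
    (H : Fin m → α → Bool) (i i' : Fin m) (hne : i ≠ i') (a : Fin n → α)
    (hS : (diffIdx H i i' a).Nonempty) :
    swapMap H i i' a = dtog H i i' (a ((diffIdx H i i' a).min' hS)) := by
  funext j y
  unfold swapMap toggleEdge dtog
  rw [dif_pos hS]
  by_cases h1 : j = i' ∧ y = a ((diffIdx H i i' a).min' hS)
  · have hji : ¬(j = i ∧ y = a ((diffIdx H i i' a).min' hS)) := by
      rintro ⟨hj, -⟩
      exact hne (hj ▸ h1.1.symm).symm
    simp [h1, hji, hne.symm]
  · by_cases h2 : j = i ∧ y = a ((diffIdx H i i' a).min' hS)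
    · simp [h1, h2, hne]
    · simp [h1, h2]

lemma dtog_dtog {α : Type*} [DecidableEq α] {m : ℕ}
    (H : Fin m → α → Bool) (i i' : Fin m) (hne : i ≠ i') (x : α) :
    dtog (dtog H i i' x) i i' x = H := by
  funext j y
  unfold dtog
  by_cases h1 : j = i ∧ y = x
  · have hji : ¬(j = i' ∧ y = x) := by
      rintro ⟨hj, -⟩
      exact hne (h1.1 ▸ hj)
    simp [h1, hji]
  · by_cases h2 : j = i' ∧ y = x
    · simp [h1, h2]
    · simp [h1, h2]

lemma diffIdx_dtog {α : Type*} [DecidableEq α] {m n : ℕ}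
    (H : Fin m → α → Bool) (i i' : Fin m) (hne : i ≠ i') (a : Fin n → α) (x : α) :
    diffIdx (dtog H i i' x) i i' a = diffIdx H i i' a := by
  ext k'
  have h1 : ¬(i = i' ∧ a k' = x) := fun h => hne h.1
  have h2 : ¬(i' = i ∧ a k' = x) := fun h => hne h.1.symm
  simp only [diffIdx, Finset.mem_filter, Finset.mem_univ, true_and, dtog, h1, h2, if_false,
    if_neg h1, if_neg h2]
  by_cases hk : a k' = x
  · simp only [hk, and_true, if_pos rfl]
    cases H i x <;> cases H i' x <;> simp
  · simp [hk]

lemma dtog_card {α : Type*} [Fintype α] [DecidableEq α] {m : ℕ}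
    (H : Fin m → α → Bool) (i i' : Fin m) (hne : i ≠ i') (x : α)
    (hdiff : H i x ≠ H i' x) :
    (Finset.univ.filter fun p : Fin m × α => dtog H i i' x p.1 p.2 = true).card =
      (Finset.univ.filter fun p : Fin m × α => H p.1 p.2 = true).card := by
  have key : ∀ p : Fin m × α, dtog H i i' x p.1 p.2
      = H (Equiv.swap ((i, x) : Fin m × α) (i', x) p).1
          (Equiv.swap ((i, x) : Fin m × α) (i', x) p).2 := by
    rintro ⟨j, y⟩
    unfold dtog
    by_cases h1 : j = i ∧ y = x
    · rw [h1.1, h1.2]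
      simp only [Equiv.swap_apply_left, and_self, if_pos rfl]
      cases h : H i x <;> cases h' : H i' x <;> simp_all
    · by_cases h2 : j = i' ∧ y = x
      · rw [h2.1, h2.2]
        have hii : ¬(i' = i ∧ x = x) := fun h => hne h.1.symm
        simp only [Equiv.swap_apply_right, if_neg hii, and_self, if_pos rfl]
        cases h : H i x <;> cases h' : H i' x <;> simp_all
      · have hp1 : ((j, y) : Fin m × α) ≠ (i, x) := by
          simp only [ne_eq, Prod.mk.injEq, not_and]
          intro hj hy; exact h1 ⟨hj, hy⟩
        have hp2 : ((j, y) : Fin m × α) ≠ (i', x) := by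
          simp only [ne_eq, Prod.mk.injEq, not_and]
          intro hj hy; exact h2 ⟨hj, hy⟩
        rw [if_neg h1, if_neg h2, Equiv.swap_apply_of_ne_of_ne hp1 hp2]
  apply Finset.card_nbij' (fun p => Equiv.swap ((i, x) : Fin m × α) (i', x) p)
    (fun p => Equiv.swap ((i, x) : Fin m × α) (i', x) p)
  · intro p hp
    simp only [Finset.mem_coe, Finset.mem_filter, Finset.mem_univ, true_and] at hp ⊢
    rw [← key]
    exact hp
  · intro p hp
    simp only [Finset.mem_coe, Finset.mem_filter, Finset.mem_univ, true_and] at hp ⊢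
    rw [key, Equiv.swap_apply_self]
    exact hp
  · intro p _; exact Equiv.swap_apply_self _ _ _
  · intro p _; exact Equiv.swap_apply_self _ _ _

lemma dtog_parityA {α : Type*} [Fintype α] [DecidableEq α] {m : ℕ}
    (H : Fin m → α → Bool) (i i' : Fin m) (hne : i ≠ i') (x : α) (y : α) :
    (Finset.univ.filter fun j : Fin m => dtog H i i' x j y = true).card % 2 =
      (Finset.univ.filter fun j : Fin m => H j y = true).card % 2 := by
  by_cases hy : y = x
  · have h1 := parity_flip (fun j => H j y) i
    have h2 := parity_flip (fun j => if j = i then !(H j y) else H j y) i'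
    have e1 : (Finset.univ.filter fun j : Fin m => dtog H i i' x j y = true)
        = (Finset.univ.filter fun j : Fin m =>
            (if j = i' then !(if j = i then !(H j y) else H j y)
             else if j = i then !(H j y) else H j y) = true) := by
      ext j
      by_cases hj1 : j = i
      · have : ¬ j = i' := fun h => hne (hj1 ▸ h)
        simp [dtog, hj1, hy, this, hne]
      · by_cases hj2 : j = i'
        · simp [dtog, hj1, hj2, hy, hne.symm]
        · simp [dtog, hj1, hj2]
    rw [e1]
    omega
  · have e1 : (Finset.univ.filter fun j : Fin m => dtog H i i' x j y = true)
        = (Finset.univ.filter fun j : Fin m => H j y = true) := by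
      ext j
      simp [dtog, hy]
    rw [e1]

lemma dtog_parityB {α : Type*} [Fintype α] [DecidableEq α] {m : ℕ}
    (H : Fin m → α → Bool) (i i' : Fin m) (x : α) (j : Fin m)
    (hj1 : j ≠ i) (hj2 : j ≠ i') :
    (Finset.univ.filter fun y : α => dtog H i i' x j y = true)
      = (Finset.univ.filter fun y : α => H j y = true) := by
  ext y
  simp [dtog, hj1, hj2]

lemma dtog_flip_i {α : Type*} [Fintype α] [DecidableEq α] {m : ℕ}
    (H : Fin m → α → Bool) (i i' : Fin m) (hne : i ≠ i') (x : α) :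
    (Finset.univ.filter fun y : α => dtog H i i' x i y = true).card % 2 ≠
      (Finset.univ.filter fun y : α => H i y = true).card % 2 := by
  have h1 := parity_flip (fun y => H i y) x
  have e1 : (Finset.univ.filter fun y : α => dtog H i i' x i y = true)
      = (Finset.univ.filter fun y : α => (if y = x then !(H i y) else H i y) = true) := by
    ext y
    by_cases hy : y = x <;> simp [dtog, hy, hne]
  rw [e1]
  exact h1

lemma dtog_flip_i' {α : Type*} [Fintype α] [DecidableEq α] {m : ℕ}
    (H : Fin m → α → Bool) (i i' : Fin m) (hne : i ≠ i') (x : α) :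
    (Finset.univ.filter fun y : α => dtog H i i' x i' y = true).card % 2 ≠
      (Finset.univ.filter fun y : α => H i' y = true).card % 2 := by
  have h1 := parity_flip (fun y => H i' y) x
  have e1 : (Finset.univ.filter fun y : α => dtog H i i' x i' y = true)
      = (Finset.univ.filter fun y : α => (if y = x then !(H i' y) else H i' y) = true) := by
    ext y
    by_cases hy : y = x <;> simp [dtog, hy, hne.symm]
  rw [e1]
  exact h1

theorem stmt6 {α : Type*} [Fintype α] [DecidableEq α] [Nonempty α]
    (m n : ℕ) (hm : 2 ≤ m) (hn : 1 ≤ n)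
    (i i' : Fin m) (hii' : (i' : ℕ) = (i : ℕ) + 1)
    (a : Fin n → α) (ha : Function.Injective a)
    (H : Fin m → α → Bool) (hS : (diffIdx H i i' a).Nonempty) :
    -- f maps S to S
    (diffIdx (swapMap H i i' a) i i' a).Nonempty ∧
    -- f is an involution on S
    swapMap (swapMap H i i' a) i i' a = H ∧
    -- f preserves the total number of edges
    (Finset.univ.filter fun p : Fin m × α => swapMap H i i' a p.1 p.2 = true).card =
      (Finset.univ.filter fun p : Fin m × α => H p.1 p.2 = true).card ∧
    -- f preserves the degree parity of every vertex of A
    (∀ x : α,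
      (Finset.univ.filter fun j : Fin m => swapMap H i i' a j x = true).card % 2 =
      (Finset.univ.filter fun j : Fin m => H j x = true).card % 2) ∧
    -- f preserves the degree parity of every vertex of B other than b_i, b_{i+1}
    (∀ j : Fin m, j ≠ i → j ≠ i' →
      (Finset.univ.filter fun x : α => swapMap H i i' a j x = true).card % 2 =
      (Finset.univ.filter fun x : α => H j x = true).card % 2) ∧
    -- f flips the degree parities of b_i and b_{i+1}
    (Finset.univ.filter fun x : α => swapMap H i i' a i x = true).card % 2 ≠
      (Finset.univ.filter fun x : α => H i x = true).card % 2 ∧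
    (Finset.univ.filter fun x : α => swapMap H i i' a i' x = true).card % 2 ≠
      (Finset.univ.filter fun x : α => H i' x = true).card % 2 := by
  have hne : i ≠ i' := by
    intro h
    rw [h] at hii'
    omega
  have hEq := swapMap_eq H i i' hne a hS
  have hdiff : H i (a ((diffIdx H i i' a).min' hS)) ≠ H i' (a ((diffIdx H i i' a).min' hS)) := by
    simpa [diffIdx] using Finset.min'_mem (diffIdx H i i' a) hS
  have hD : diffIdx (swapMap H i i' a) i i' a = diffIdx H i i' a := by
    rw [hEq]
    exact diffIdx_dtog H i i' hne a _
  refine ⟨hD ▸ hS, ?_, ?_, ?_, ?_, ?_, ?_⟩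
  · -- involution
    have hS2 : (diffIdx (swapMap H i i' a) i i' a).Nonempty := hD ▸ hS
    rw [swapMap_eq (swapMap H i i' a) i i' hne a hS2]
    have hmin : ∀ h2 : (diffIdx (swapMap H i i' a) i i' a).Nonempty,
        (diffIdx (swapMap H i i' a) i i' a).min' h2 = (diffIdx H i i' a).min' hS := by
      rw [hD]
      intro h2
      rfl
    rw [hmin hS2, hEq]
    exact dtog_dtog H i i' hne _
  · rw [hEq]
    exact dtog_card H i i' hne _ hdiff
  · intro y
    rw [hEq]
    exact dtog_parityA H i i' hne _ y
  · intro j hj1 hj2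
    rw [hEq, dtog_parityB H i i' _ j hj1 hj2]
  · rw [hEq]
    exact dtog_flip_i H i i' hne _
  · rw [hEq]
    exact dtog_flip_i' H i i' hne _
end

section
/- For G ~ G(n, 1/2) with n even, the probability that every vertex of G has odd degree is at least 2^{−2n}; hence for n ≥ 3 even, P[G(n,1/2) is not even-degenerate] ≥ 2^{−2n}. -/
/-- A graph `G` on `n` vertices is even-degenerate if there is an ordering
`v 0, …, v (n-1)` of its vertices such that for every (0-based) index `i` with
`i + 3 ≤ n` (i.e. 1-based index at most `n - 2`), the vertex `v i` has an even
number of neighbors among the later vertices. -/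
def EvenDegenerate {V : Type*} [Fintype V] (G : SimpleGraph V) : Prop :=
  ∃ v : Fin (Fintype.card V) ≃ V,
    ∀ i : Fin (Fintype.card V), (i : ℕ) + 3 ≤ Fintype.card V →
      Even {j : Fin (Fintype.card V) | i < j ∧ G.Adj (v i) (v j)}.ncard

open scoped symmDiff

variable {n : ℕ}

/-- Star at vertex 0 with leaf-set `T`. -/
def starG (n : ℕ) [NeZero n] (T : Finset (Fin n)) : SimpleGraph (Fin n) where
  Adj a b := a ≠ b ∧ ((a = 0 ∧ b ∈ T) ∨ (b = 0 ∧ a ∈ T))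
  symm := by constructor; intro a b ⟨h1, h2⟩; exact ⟨h1.symm, h2.symm⟩
  loopless := by constructor; intro a ⟨h1, _⟩; exact h1 rfl

lemma card_symmDiff' (s t : Finset (Fin n)) :
    (s ∆ t).card + 2 * (s ∩ t).card = s.card + t.card := by
  rw [symmDiff_def, Finset.sup_eq_union, Finset.card_union_of_disjoint disjoint_sdiff_sdiff]
  have h1 := Finset.card_sdiff_add_card_inter s t
  have h2 := Finset.card_sdiff_add_card_inter t s
  rw [Finset.inter_comm] at h2
  omega

lemma ncard_neighborSet (G : SimpleGraph (Fin n)) [DecidableRel G.Adj] (x : Fin n) :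
    (G.neighborSet x).ncard = G.degree x := by
  rw [Set.ncard_eq_toFinset_card']; rfl

lemma symmDiff_adj (G H : SimpleGraph (Fin n)) (a b : Fin n) :
    (G ∆ H).Adj a b ↔ (G.Adj a b ∧ ¬ H.Adj a b) ∨ (H.Adj a b ∧ ¬ G.Adj a b) := by
  rw [symmDiff_def]; simp

lemma neighborFinset_symmDiff (G H : SimpleGraph (Fin n)) [DecidableRel G.Adj]
    [DecidableRel H.Adj] [DecidableRel (G ∆ H).Adj] (x : Fin n) :
    (G ∆ H).neighborFinset x = G.neighborFinset x ∆ H.neighborFinset x := by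
  ext b
  simp only [SimpleGraph.mem_neighborFinset, Finset.mem_symmDiff, symmDiff_adj]

lemma star_nf_zero [NeZero n] (T : Finset (Fin n)) (hT : (0 : Fin n) ∉ T)
    [DecidableRel (starG n T).Adj] :
    (starG n T).neighborFinset 0 = T := by
  ext b
  rw [SimpleGraph.mem_neighborFinset]; simp only [starG]
  constructor
  · rintro ⟨h1, (⟨-, h2⟩ | ⟨h2, h3⟩)⟩
    · exact h2
    · exact absurd h3 (by rw [h2] at h1; exact fun h => h1 rfl)
  · intro hb
    exact ⟨fun h => hT (h ▸ hb), Or.inl ⟨by simp, hb⟩⟩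

lemma star_nf_ne [NeZero n] (T : Finset (Fin n)) (hT : (0 : Fin n) ∉ T)
    {x : Fin n} (hx : x ≠ 0) [DecidableRel (starG n T).Adj] :
    (starG n T).neighborFinset x = if x ∈ T then {0} else ∅ := by
  ext b
  rw [SimpleGraph.mem_neighborFinset]; simp only [starG]
  split_ifs with h
  · simp only [Finset.mem_singleton]
    constructor
    · rintro ⟨h1, (⟨h2, -⟩ | ⟨h2, -⟩)⟩
      · exact absurd h2 hx
      · exact h2
    · rintro rfl; exact ⟨by simpa using hx, Or.inr ⟨by simp, h⟩⟩
  · simp only [Finset.notMem_empty, iff_false]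
    rintro ⟨h1, (⟨h2, -⟩ | ⟨-, h3⟩)⟩
    · exact hx h2
    · exact h h3

open Classical in
noncomputable def TG (n : ℕ) [NeZero n] (G : SimpleGraph (Fin n)) : Finset (Fin n) :=
  Finset.univ.filter (fun x => Even ((G.neighborSet x).ncard) ∧ x ≠ 0)

lemma mem_TG [NeZero n] (G : SimpleGraph (Fin n)) (x : Fin n) :
    x ∈ TG n G ↔ Even ((G.neighborSet x).ncard) ∧ x ≠ 0 := by
  simp [TG]

lemma zero_not_mem_TG [NeZero n] (G : SimpleGraph (Fin n)) : (0 : Fin n) ∉ TG n G := by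
  rw [mem_TG]
  simp

lemma card_TG_parity [NeZero n] (hn : Even n) (G : SimpleGraph (Fin n)) :
    Odd (TG n G).card ↔ Even ((G.neighborSet 0).ncard) := by
  classical
  set E : Finset (Fin n) := Finset.univ.filter (fun x => Even ((G.neighborSet x).ncard))
    with hE
  have hTG : TG n G = E.erase 0 := by
    ext x
    rw [mem_TG, Finset.mem_erase, hE, Finset.mem_filter]
    simp [and_comm]
  have hO : Even (Finset.univ.filter (fun v => Odd (G.degree v))).card :=
    G.even_card_odd_degree_vertices
  have hsum : E.card + (Finset.univ.filter (fun v => Odd (G.degree v))).card = n := by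
    rw [hE]
    have h1 : (Finset.univ.filter (fun v => Odd (G.degree v)) : Finset (Fin n))
        = Finset.univ.filter (fun v => ¬ Even ((G.neighborSet v).ncard)) := by
      ext x
      simp only [Finset.mem_filter, ncard_neighborSet, Nat.not_even_iff_odd]
    rw [h1, Finset.card_filter_add_card_filter_not]
    exact Fintype.card_fin n
  have hEeven : Even E.card := by
    rcases hO with ⟨k, hk⟩; rcases hn with ⟨m, hm⟩
    exact ⟨m - k, by omega⟩
  by_cases h0 : (0 : Fin n) ∈ E
  · have hcard : (E.erase 0).card = E.card - 1 := Finset.card_erase_of_mem h0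
    have hpos : 0 < E.card := Finset.card_pos.mpr ⟨0, h0⟩
    have h0' : Even ((G.neighborSet 0).ncard) := by
      rw [hE, Finset.mem_filter] at h0; exact h0.2
    rw [hTG, hcard]
    simp only [h0', iff_true]
    rcases hEeven with ⟨k, hk⟩
    exact ⟨k - 1, by omega⟩
  · have hcard : E.erase 0 = E := Finset.erase_eq_of_notMem h0
    have h0' : ¬ Even ((G.neighborSet 0).ncard) := by
      rw [hE, Finset.mem_filter] at h0; simpa using h0
    rw [hTG, hcard]
    simp only [h0', iff_false, Nat.not_even_iff_odd, ← Nat.not_even_iff_odd, not_not]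
    exact hEeven

noncomputable def fixG (n : ℕ) [NeZero n] (G : SimpleGraph (Fin n)) : SimpleGraph (Fin n) :=
  G ∆ starG n (TG n G)

lemma fixG_all_odd [NeZero n] (hn : Even n) (G : SimpleGraph (Fin n)) (x : Fin n) :
    Odd (((fixG n G).neighborSet x).ncard) := by
  classical
  rw [ncard_neighborSet]
  have hnf := neighborFinset_symmDiff G (starG n (TG n G)) x
  have hcard := card_symmDiff' (G.neighborFinset x) ((starG n (TG n G)).neighborFinset x)
  have hdeg : (fixG n G).degree x
      = (G.neighborFinset x ∆ (starG n (TG n G)).neighborFinset x).card := by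
    rw [SimpleGraph.degree, fixG]
    congr 1
  rw [hdeg]
  by_cases hx : x = 0
  · subst hx
    rw [star_nf_zero _ (zero_not_mem_TG G)] at hcard ⊢
    have hpar := (card_TG_parity hn G)
    rw [ncard_neighborSet] at hpar
    by_cases he : Even (G.degree 0)
    · have : Odd (TG n G).card := hpar.mpr he
      rcases he with ⟨a, ha⟩; rcases this with ⟨b, hb⟩
      exact ⟨a + b - (G.neighborFinset 0 ∩ TG n G).card, by
        simp only [SimpleGraph.degree] at ha; omega⟩
    · have hodd : Odd (G.degree 0) := Nat.not_even_iff_odd.mp he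
      have hTe : Even (TG n G).card := by
        by_contra hc
        exact he (hpar.mp (Nat.not_even_iff_odd.mp hc))
      rcases hodd with ⟨a, ha⟩; rcases hTe with ⟨b, hb⟩
      exact ⟨a + b - (G.neighborFinset 0 ∩ TG n G).card, by
        simp only [SimpleGraph.degree] at ha; omega⟩
  · rw [star_nf_ne _ (zero_not_mem_TG G) hx] at hcard ⊢
    by_cases he : Even (G.degree x)
    · have hmem : x ∈ TG n G := by
        rw [mem_TG, ncard_neighborSet]; exact ⟨he, hx⟩
      rw [if_pos hmem] at hcard ⊢
      rw [Finset.card_singleton] at hcard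
      rcases he with ⟨a, ha⟩
      exact ⟨a - (G.neighborFinset x ∩ {0}).card, by
        simp only [SimpleGraph.degree] at ha; omega⟩
    · have hmem : x ∉ TG n G := by
        rw [mem_TG, ncard_neighborSet]; tauto
      rw [if_neg hmem] at hcard ⊢
      have hemp : G.neighborFinset x ∆ (∅ : Finset (Fin n)) = G.neighborFinset x := by
        rw [show (∅ : Finset (Fin n)) = ⊥ from rfl, symmDiff_bot]
      rw [hemp]
      exact Nat.not_even_iff_odd.mp he

lemma count_le [NeZero n] (hn : Even n) :
    Nat.card (SimpleGraph (Fin n))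
      ≤ Nat.card {G : SimpleGraph (Fin n) // ∀ x : Fin n, Odd ((G.neighborSet x).ncard)}
        * 2 ^ n := by
  classical
  have hinj : Function.Injective
      (fun G : SimpleGraph (Fin n) =>
        ((⟨fixG n G, fixG_all_odd hn G⟩, TG n G) :
          {G : SimpleGraph (Fin n) // ∀ x : Fin n, Odd ((G.neighborSet x).ncard)}
            × Finset (Fin n))) := by
    intro G G' h
    simp only [Prod.mk.injEq, Subtype.mk.injEq] at h
    have h1 : fixG n G = fixG n G' := h.1
    have h2 : TG n G = TG n G' := h.2
    have e1 : G = fixG n G ∆ starG n (TG n G) := (symmDiff_symmDiff_cancel_right _ _).symm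
    rw [e1, h1, h2, fixG, symmDiff_symmDiff_cancel_right]
  calc Nat.card (SimpleGraph (Fin n))
      ≤ Nat.card ({G : SimpleGraph (Fin n) // ∀ x : Fin n, Odd ((G.neighborSet x).ncard)}
          × Finset (Fin n)) := Nat.card_le_card_of_injective _ hinj
    _ = _ := by
        rw [Nat.card_prod, Nat.card_eq_fintype_card (α := Finset (Fin n)),
          Fintype.card_finset, Fintype.card_fin]

lemma allOdd_not_evenDeg (hn3 : 3 ≤ n) (G : SimpleGraph (Fin n))
    (hG : ∀ x : Fin n, Odd ((G.neighborSet x).ncard)) : ¬ EvenDegenerate G := by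
  rintro ⟨v, hv⟩
  have hc : Fintype.card (Fin n) = n := Fintype.card_fin n
  set i0 : Fin (Fintype.card (Fin n)) := ⟨0, by omega⟩ with hi0
  have h0 := hv i0 (by simp [hi0]; omega)
  have himg : v '' {j : Fin (Fintype.card (Fin n)) | i0 < j ∧ G.Adj (v i0) (v j)}
      = G.neighborSet (v i0) := by
    ext x
    simp only [Set.mem_image, Set.mem_setOf_eq, SimpleGraph.mem_neighborSet]
    constructor
    · rintro ⟨j, ⟨-, hadj⟩, rfl⟩; exact hadj
    · intro hadj
      refine ⟨v.symm x, ⟨?_, by simp [hadj]⟩, by simp⟩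
      have hne : v.symm x ≠ i0 := by
        intro hh
        apply G.ne_of_adj hadj.symm
        rw [← hh]; simp
      rw [Fin.lt_def]
      have : (v.symm x).val ≠ 0 := fun hz => hne (Fin.ext (by simp [hi0, hz]))
      simp [hi0]; omega
  have := hG (v i0)
  rw [← himg, Set.ncard_image_of_injective _ v.injective] at this
  exact (Nat.not_even_iff_odd.mpr this) h0

/-- under the uniform distribution on graphs on `n` labelled vertices
(which is exactly `G(n, 1/2)`), for `n` even the probability that every vertex has
odd degree is at least `2 ^ (-2n)`; hence for even `n ≥ 3` the probability of not
being even-degenerate is at least `2 ^ (-2n)`. -/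
theorem stmt9 (n : ℕ) (hn : Even n) :
    ((2 : ℝ) ^ (2 * n))⁻¹ ≤
      (Nat.card {G : SimpleGraph (Fin n) // ∀ x : Fin n, Odd (G.neighborSet x).ncard} : ℝ) /
        (Nat.card (SimpleGraph (Fin n)) : ℝ) ∧
    (3 ≤ n →
      ((2 : ℝ) ^ (2 * n))⁻¹ ≤
        (Nat.card {G : SimpleGraph (Fin n) // ¬ EvenDegenerate G} : ℝ) /
          (Nat.card (SimpleGraph (Fin n)) : ℝ)) := by
  classical
  rcases Nat.eq_zero_or_pos n with rfl | hpos
  · haveI : Subsingleton (SimpleGraph (Fin 0)) := by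
      constructor
      intro a b
      ext x
      exact x.elim0
    haveI : Unique (SimpleGraph (Fin 0)) := uniqueOfSubsingleton ⊥
    haveI : Unique {G : SimpleGraph (Fin 0) // ∀ x : Fin 0, Odd (G.neighborSet x).ncard} :=
      uniqueOfSubsingleton ⟨⊥, fun x => x.elim0⟩
    rw [Nat.card_unique, Nat.card_unique]
    constructor
    · norm_num
    · intro h; omega
  · haveI : NeZero n := ⟨hpos.ne'⟩
    set oddN := Nat.card {G : SimpleGraph (Fin n) // ∀ x : Fin n, Odd (G.neighborSet x).ncard}
      with hoddN
    set totN := Nat.card (SimpleGraph (Fin n)) with htotN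
    have htpos : 0 < totN := Nat.card_pos
    have htpos' : (0 : ℝ) < totN := by exact_mod_cast htpos
    have hkey : (totN : ℝ) ≤ oddN * 2 ^ (2 * n) := by
      have h1 : totN ≤ oddN * 2 ^ n := count_le hn
      have h2 : (2 : ℕ) ^ n ≤ 2 ^ (2 * n) := Nat.pow_le_pow_right (by norm_num) (by omega)
      have h3 : totN ≤ oddN * 2 ^ (2 * n) := h1.trans (Nat.mul_le_mul_left _ h2)
      exact_mod_cast h3
    have hfirst : ((2 : ℝ) ^ (2 * n))⁻¹ ≤ (oddN : ℝ) / totN := by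
      rw [le_div_iff₀ htpos']
      calc ((2 : ℝ) ^ (2 * n))⁻¹ * totN ≤ ((2 : ℝ) ^ (2 * n))⁻¹ * (oddN * 2 ^ (2 * n)) := by
            apply mul_le_mul_of_nonneg_left hkey (by positivity)
        _ = oddN := by field_simp
    refine ⟨hfirst, fun hn3 => ?_⟩
    have hle : oddN ≤ Nat.card {G : SimpleGraph (Fin n) // ¬ EvenDegenerate G} := by
      apply Nat.card_le_card_of_injective
        (fun x => (⟨x.1, allOdd_not_evenDeg hn3 x.1 x.2⟩ :
          {G : SimpleGraph (Fin n) // ¬ EvenDegenerate G}))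
      intro a b h
      simp only [Subtype.mk.injEq] at h
      exact Subtype.ext h
    refine hfirst.trans ?_
    gcongr
end

section
/- Suppose real constants K > 0, K_0 > 0 with K_0 < K/2, α ∈ (0,1/2), c ∈ (0, 1/4) with ζ := 2·(1/4 − c)^{1/2−α} − 1 > 0, ε > 0 with ε + ε^ζ < 1, and integers M_ε < (1/4 − c)M with K_0 = ln(1/ε)/M^{1/2−α}. Let f: ℕ → [0,1] satisfy f(n) < ε for all n > M_ε and f(n) ≤ e^{−K n^{1/2−α}} + max_{n' ∈ [n/4 − cn, n/4 + cn]} f(n')² for all n > M. If f(n) ≤ e^{−K_0 n^{1/2−α}} for all M_ε ≤ n ≤ M, then f(n) ≤ e^{−K_0 n^{1/2−α}} for all n ≥ M_ε. -/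
set_option maxHeartbeats 1000000


theorem stmt13 (K K₀ α c ζ ε : ℝ) (Mε M : ℕ) (f : ℕ → ℝ)
    (hK : 0 < K) (hK₀ : 0 < K₀) (hK₀K : K₀ < K / 2)
    (hα0 : 0 < α) (hα : α < 1 / 2)
    (hc0 : 0 < c) (hc : c < 1 / 4)
    (hζdef : ζ = 2 * (1 / 4 - c) ^ ((1 : ℝ) / 2 - α) - 1) (hζ : 0 < ζ)
    (hε0 : 0 < ε) (hεζ : ε + ε ^ ζ < 1)
    (hM : (Mε : ℝ) < (1 / 4 - c) * M)
    (hK₀def : K₀ = Real.log (1 / ε) / (M : ℝ) ^ ((1 : ℝ) / 2 - α))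
    (hf01 : ∀ n, f n ∈ Set.Icc (0 : ℝ) 1)
    (hsmall : ∀ n : ℕ, Mε < n → f n < ε)
    (hrec : ∀ n : ℕ, M < n →
      f n ≤ Real.exp (-K * (n : ℝ) ^ ((1 : ℝ) / 2 - α)) +
        sSup {y : ℝ | ∃ n' : ℕ, (n : ℝ) / 4 - c * n ≤ (n' : ℝ) ∧
          (n' : ℝ) ≤ (n : ℝ) / 4 + c * n ∧ y = (f n') ^ 2})
    (hbase : ∀ n : ℕ, Mε ≤ n → n ≤ M →
      f n ≤ Real.exp (-K₀ * (n : ℝ) ^ ((1 : ℝ) / 2 - α))) :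
    ∀ n : ℕ, Mε ≤ n → f n ≤ Real.exp (-K₀ * (n : ℝ) ^ ((1 : ℝ) / 2 - α)) := by
  set p : ℝ := (1 : ℝ) / 2 - α with hpdef
  have hp : 0 < p := by simp only [hpdef]; linarith
  have hε1 : ε < 1 := by
    have := Real.rpow_pos_of_pos hε0 ζ
    linarith
  have hM1 : 1 ≤ M := by
    rcases Nat.eq_zero_or_pos M with h | h
    · exfalso
      rw [h] at hM
      push_cast at hM
      nlinarith [Nat.cast_nonneg (α := ℝ) Mε]
    · exact h
  have hMp : (0 : ℝ) < (M : ℝ) ^ p := by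
    apply Real.rpow_pos_of_pos
    exact_mod_cast Nat.lt_of_lt_of_le Nat.zero_lt_one hM1
  have hK₀M : K₀ * (M : ℝ) ^ p = Real.log (1 / ε) := by
    rw [hK₀def]; field_simp
  have hlog : Real.log (1 / ε) = -Real.log ε := by
    rw [one_div, Real.log_inv]
  intro n
  induction n using Nat.strong_induction_on with
  | _ n ih =>
    intro hMεn
    rcases le_or_gt n M with hnM | hnM
    · exact hbase n hMεn hnM
    · -- inductive step
      have hn0 : (0 : ℝ) < (n : ℝ) := by
        exact_mod_cast Nat.lt_of_lt_of_le (Nat.lt_of_lt_of_le Nat.zero_lt_one hM1) (le_of_lt hnM)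
      have hnp : (0 : ℝ) < (n : ℝ) ^ p := Real.rpow_pos_of_pos hn0 p
      have hMn : (M : ℝ) ^ p ≤ (n : ℝ) ^ p := by
        apply Real.rpow_le_rpow (by positivity) (by exact_mod_cast le_of_lt hnM) (le_of_lt hp)
      -- bound the sSup
      have hsup : sSup {y : ℝ | ∃ n' : ℕ, (n : ℝ) / 4 - c * n ≤ (n' : ℝ) ∧
          (n' : ℝ) ≤ (n : ℝ) / 4 + c * n ∧ y = (f n') ^ 2} ≤
          Real.exp (-((1 + ζ) * K₀) * (n : ℝ) ^ p) := by
        apply Real.sSup_le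
        · rintro y ⟨n', h1, h2, rfl⟩
          have hn'lb : ((1 : ℝ) / 4 - c) * n ≤ (n' : ℝ) := by linarith
          have hn'lb0 : (0 : ℝ) < ((1 : ℝ) / 4 - c) * n := by nlinarith
          have hMεn' : Mε < n' := by
            have : (Mε : ℝ) < (n' : ℝ) := by
              calc (Mε : ℝ) < (1 / 4 - c) * M := hM
                _ ≤ (1 / 4 - c) * n := by
                    apply mul_le_mul_of_nonneg_left (by exact_mod_cast le_of_lt hnM) (by linarith)
                _ ≤ (n' : ℝ) := hn'lb
            exact_mod_cast this
          have hn'n : n' < n := by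
            have : (n' : ℝ) < (n : ℝ) := by nlinarith
            exact_mod_cast this
          have hfn' := ih n' hn'n (le_of_lt hMεn')
          have hfn'0 : 0 ≤ f n' := (hf01 n').1
          calc (f n') ^ 2 ≤ (Real.exp (-K₀ * (n' : ℝ) ^ p)) ^ 2 := by
                apply pow_le_pow_left₀ hfn'0 hfn'
            _ = Real.exp (-(2 * K₀) * (n' : ℝ) ^ p) := by
                rw [sq, ← Real.exp_add]; ring_nf
            _ ≤ Real.exp (-((1 + ζ) * K₀) * (n : ℝ) ^ p) := by
                apply Real.exp_le_exp.mpr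
                have hbase' : (((1 : ℝ) / 4 - c) * n) ^ p ≤ (n' : ℝ) ^ p :=
                  Real.rpow_le_rpow (le_of_lt hn'lb0) hn'lb (le_of_lt hp)
                have hmul : (((1 : ℝ) / 4 - c) * n) ^ p = ((1 : ℝ) / 4 - c) ^ p * (n : ℝ) ^ p :=
                  Real.mul_rpow (by linarith) (le_of_lt hn0)
                have hzeta : (1 + ζ) = 2 * ((1 : ℝ) / 4 - c) ^ p := by
                  rw [hζdef]; ring
                rw [hmul] at hbase'
                have hmm := mul_le_mul_of_nonneg_left hbase'
                  (by positivity : (0:ℝ) ≤ 2 * K₀)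
                rw [hzeta]
                nlinarith [hmm]
        · positivity
      have h1 : Real.exp (-(K - K₀) * (n : ℝ) ^ p) ≤ ε := by
        have : -(K - K₀) * (n : ℝ) ^ p ≤ Real.log ε := by
          have h2 : K₀ * (M : ℝ) ^ p ≤ (K - K₀) * (n : ℝ) ^ p := by nlinarith
          rw [hlog] at hK₀M
          linarith
        calc Real.exp (-(K - K₀) * (n : ℝ) ^ p) ≤ Real.exp (Real.log ε) :=
              Real.exp_le_exp.mpr this
          _ = ε := Real.exp_log hε0
      have h2 : Real.exp (-(ζ * K₀) * (n : ℝ) ^ p) ≤ ε ^ ζ := by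
        rw [Real.rpow_def_of_pos hε0]
        apply Real.exp_le_exp.mpr
        have h3 := mul_le_mul_of_nonneg_left (mul_le_mul_of_nonneg_left hMn hK₀.le) hζ.le
        rw [hlog] at hK₀M
        nlinarith
      calc f n ≤ Real.exp (-K * (n : ℝ) ^ p) + sSup {y : ℝ | ∃ n' : ℕ,
              (n : ℝ) / 4 - c * n ≤ (n' : ℝ) ∧ (n' : ℝ) ≤ (n : ℝ) / 4 + c * n ∧
              y = (f n') ^ 2} := hrec n hnM
        _ ≤ Real.exp (-K * (n : ℝ) ^ p) + Real.exp (-((1 + ζ) * K₀) * (n : ℝ) ^ p) := by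
              linarith
        _ = Real.exp (-K₀ * (n : ℝ) ^ p) * Real.exp (-(K - K₀) * (n : ℝ) ^ p) +
            Real.exp (-K₀ * (n : ℝ) ^ p) * Real.exp (-(ζ * K₀) * (n : ℝ) ^ p) := by
              rw [← Real.exp_add, ← Real.exp_add]; ring_nf
        _ ≤ Real.exp (-K₀ * (n : ℝ) ^ p) * ε + Real.exp (-K₀ * (n : ℝ) ^ p) * ε ^ ζ := by
              have := Real.exp_pos (-K₀ * (n : ℝ) ^ p)
              gcongr
        _ = Real.exp (-K₀ * (n : ℝ) ^ p) * (ε + ε ^ ζ) := by ring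
        _ ≤ Real.exp (-K₀ * (n : ℝ) ^ p) * 1 := by
              have := Real.exp_pos (-K₀ * (n : ℝ) ^ p)
              nlinarith
        _ = Real.exp (-K₀ * (n : ℝ) ^ p) := mul_one _
end
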